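/- The UOB neighborhood scattering operator U_S maps the span of {|v⟩|00⟩, |v⟩|11⟩ : v ∈ {±1}} ('balanced' neighborhood states) into the span of {|v⟩|01⟩, |v⟩|10⟩ : v ∈ {±1}} ('unbalanced' states), and vice versa, provided γ_l = γ_r = 0. -/
import Mathlib


/-- Components of the spin-transformed vector `|b⟩_η = cos η |b⟩ + i sin η |b⊥⟩`. -/
noncomputable def spin (η : ℝ) (b : Fin 2) : Fin 2 → ℂ :=
  fun k => if k = b then (Real.cos η : ℂ) else Complex.I * Real.sin η

/-- The UOB vector `|j⟩_α |ml⟩_{γl} |mr⟩_{γr}` in `ℂ²⊗ℂ²⊗ℂ²` (components). -/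
noncomputable def uobVec (α γl γr : ℝ) (j ml mr : Fin 2) : Fin 2 × Fin 2 × Fin 2 → ℂ :=
  fun p => spin α j p.1 * spin γl ml p.2.1 * spin γr mr p.2.2

/-- The image of the computational basis vector `|v⟩|m_l m_r⟩` under the UOB neighborhood
scattering operator `U_S` of eq. (3) of the paper (velocity `0 = |+1⟩`, `1 = |−1⟩`). -/
noncomputable def usImage (α₀ α₁ β₀ β₁ γl γr θ₀ θ₁ : ℝ) (c : Fin 2 × Fin 2 × Fin 2) :
    Fin 2 × Fin 2 × Fin 2 → ℂ :=
  if c = (0, 0, 0) then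
    fun r => (Real.cos θ₀ : ℂ) * uobVec α₀ γl γr 0 0 1 r
      + Complex.I * Real.sin θ₀ * uobVec α₁ γl γr 1 1 0 r
  else if c = (1, 0, 0) then
    fun r => Complex.I * Real.sin θ₀ * uobVec α₀ γl γr 0 0 1 r
      + (Real.cos θ₀ : ℂ) * uobVec α₁ γl γr 1 1 0 r
  else if c = (0, 0, 1) then uobVec β₀ γl γr 1 1 1
  else if c = (1, 1, 0) then uobVec β₀ γl γr 0 1 1
  else if c = (0, 1, 0) then uobVec β₁ γl γr 0 0 0
  else if c = (1, 0, 1) then uobVec β₁ γl γr 1 0 0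
  else if c = (0, 1, 1) then
    fun r => (Real.cos θ₁ : ℂ) * uobVec α₁ γl γr 0 1 0 r
      + Complex.I * Real.sin θ₁ * uobVec α₀ γl γr 1 0 1 r
  else
    fun r => Complex.I * Real.sin θ₁ * uobVec α₁ γl γr 0 1 0 r
      + (Real.cos θ₁ : ℂ) * uobVec α₀ γl γr 1 0 1 r

/-- The UOB neighborhood scattering operator `U_S` as a matrix (columns are the images of
the computational basis vectors). -/
noncomputable def USmat (α₀ α₁ β₀ β₁ γl γr θ₀ θ₁ : ℝ) :
    Matrix (Fin 2 × Fin 2 × Fin 2) (Fin 2 × Fin 2 × Fin 2) ℂ :=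
  Matrix.of fun r c => usImage α₀ α₁ β₀ β₁ γl γr θ₀ θ₁ c r


/-- Span of the 'balanced' computational basis states `|v⟩|00⟩, |v⟩|11⟩`. -/
noncomputable def balancedSpan : Submodule ℂ (Fin 2 × Fin 2 × Fin 2 → ℂ) :=
  Submodule.span ℂ {w | ∃ (v a : Fin 2), w = Pi.single (v, a, a) (1 : ℂ)}

/-- Span of the 'unbalanced' computational basis states `|v⟩|01⟩, |v⟩|10⟩`. -/
noncomputable def unbalancedSpan : Submodule ℂ (Fin 2 × Fin 2 × Fin 2 → ℂ) :=
  Submodule.span ℂ {w | ∃ (v a b : Fin 2), a ≠ b ∧ w = Pi.single (v, a, b) (1 : ℂ)}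


lemma mem_unbal (f : Fin 2 × Fin 2 × Fin 2 → ℂ) (h : ∀ v a, f (v, a, a) = 0) :
    f ∈ unbalancedSpan := by
  have hf : f = f (0,0,1) • (Pi.single (0,0,1) 1 : Fin 2 × Fin 2 × Fin 2 → ℂ)
      + f (0,1,0) • (Pi.single (0,1,0) 1 : Fin 2 × Fin 2 × Fin 2 → ℂ)
      + f (1,0,1) • (Pi.single (1,0,1) 1 : Fin 2 × Fin 2 × Fin 2 → ℂ)
      + f (1,1,0) • (Pi.single (1,1,0) 1 : Fin 2 × Fin 2 × Fin 2 → ℂ) := by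
    funext p
    obtain ⟨v, a, b⟩ := p
    fin_cases v <;> fin_cases a <;> fin_cases b <;>
      (simp [Pi.single_apply, Prod.ext_iff]; try exact h _ _)
  rw [hf]
  have hm : ∀ (v a b : Fin 2), a ≠ b →
      ((Pi.single (v,a,b) 1 : Fin 2 × Fin 2 × Fin 2 → ℂ)) ∈ unbalancedSpan := by
    intro v a b hab
    exact Submodule.subset_span ⟨v, a, b, hab, rfl⟩
  refine Submodule.add_mem _ (Submodule.add_mem _ (Submodule.add_mem _ ?_ ?_) ?_) ?_ <;>
    exact Submodule.smul_mem _ _ (hm _ _ _ (by decide))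

lemma mem_bal (f : Fin 2 × Fin 2 × Fin 2 → ℂ) (h : ∀ v a b, a ≠ b → f (v, a, b) = 0) :
    f ∈ balancedSpan := by
  have hf : f = f (0,0,0) • (Pi.single (0,0,0) 1 : Fin 2 × Fin 2 × Fin 2 → ℂ)
      + f (0,1,1) • (Pi.single (0,1,1) 1 : Fin 2 × Fin 2 × Fin 2 → ℂ)
      + f (1,0,0) • (Pi.single (1,0,0) 1 : Fin 2 × Fin 2 × Fin 2 → ℂ)
      + f (1,1,1) • (Pi.single (1,1,1) 1 : Fin 2 × Fin 2 × Fin 2 → ℂ) := by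
    funext p
    obtain ⟨v, a, b⟩ := p
    fin_cases v <;> fin_cases a <;> fin_cases b <;>
      (simp [Pi.single_apply, Prod.ext_iff]; try exact h _ _ _ (by decide))
  rw [hf]
  have hm : ∀ (v a : Fin 2),
      ((Pi.single (v,a,a) 1 : Fin 2 × Fin 2 × Fin 2 → ℂ)) ∈ balancedSpan := by
    intro v a
    exact Submodule.subset_span ⟨v, a, rfl⟩
  refine Submodule.add_mem _ (Submodule.add_mem _ (Submodule.add_mem _ ?_ ?_) ?_) ?_ <;>
    exact Submodule.smul_mem _ _ (hm _ _)

lemma col_eq (α₀ α₁ β₀ β₁ γl γr θ₀ θ₁ : ℝ) (c : Fin 2 × Fin 2 × Fin 2) :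
    (USmat α₀ α₁ β₀ β₁ γl γr θ₀ θ₁).mulVec (Pi.single c 1)
      = usImage α₀ α₁ β₀ β₁ γl γr θ₀ θ₁ c := by
  funext r
  simp [Matrix.mulVec_single, USmat]

/-- When `γ_l = γ_r = 0`, the UOB neighborhood scattering operator maps balanced
neighborhood states into the span of unbalanced ones and vice versa. -/
theorem USmat_swaps_balanced_unbalanced (α₀ α₁ β₀ β₁ θ₀ θ₁ : ℝ) :
    (∀ (v a b : Fin 2), a = b →
        (USmat α₀ α₁ β₀ β₁ 0 0 θ₀ θ₁).mulVec (Pi.single (v, a, b) 1) ∈ unbalancedSpan) ∧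
    (∀ (v a b : Fin 2), a ≠ b →
        (USmat α₀ α₁ β₀ β₁ 0 0 θ₀ θ₁).mulVec (Pi.single (v, a, b) 1) ∈ balancedSpan) := by
  constructor
  · intro v a b hab
    subst hab
    rw [col_eq]
    apply mem_unbal
    intro w x
    fin_cases v <;> fin_cases a <;> fin_cases w <;> fin_cases x <;>
      simp [usImage, uobVec, spin, Prod.ext_iff]
  · intro v a b hab
    rw [col_eq]
    apply mem_bal
    intro w x y hxy
    fin_cases v <;> fin_cases a <;> fin_cases b <;>
      first
      | exact absurd rfl hab
      | (fin_cases w <;> fin_cases x <;> fin_cases y <;>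
          first
          | exact absurd rfl hxy
          | simp [usImage, uobVec, spin, Prod.ext_iff])
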